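/- arXiv:2201.00041 — 5 statements merged into one kernel-verified Lean document; each statement's English description precedes it below -/
import Mathlib

section
/- There exists t1' ∈ (t0,t1) such that R(t0,τ) = R(t0,t1) for every τ ∈ (t1', t1]; i.e., the reachable set stabilizes before the final time. (Proposition 3.2 (iii).) -/
open MeasureTheory Set

noncomputable section

/-- A control: a measurable, essentially bounded map `ℝ → ℝ^k`. -/
def IsControl (k : ℕ) (u : ℝ → Fin k → ℝ) : Prop :=
  Measurable u ∧ ∃ C : ℝ, ∀ᵐ t : ℝ, ‖u t‖ ≤ C

/-- The endpoint map `E_a(τ, Δu) = ∫_a^τ A(t) · Δu(t) dt`. -/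
def epMap (k m : ℕ) (A : ℝ → Matrix (Fin m) (Fin k) ℝ) (a τ : ℝ)
    (u : ℝ → Fin k → ℝ) : Fin m → ℝ :=
  ∫ t in a..τ, (A t).mulVec (u t)

/-- The reachable set `R(a,τ)` of the characteristic linear control system. -/
def reach (k m : ℕ) (A : ℝ → Matrix (Fin m) (Fin k) ℝ) (a τ : ℝ) :
    Set (Fin m → ℝ) :=
  { v | ∃ u, IsControl k u ∧ epMap k m A a τ u = v }

/-!
The reachable sets `R(t0,τ)` are linear subspaces of `ℝ^m`, increasing in `τ` (extend a control
by zero). Since `ℝ^m` is Noetherian, the subspaces `R(t0,τ)`, `τ ∈ (t0,t1)`, have a largest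
member `R(t0,t1')`, and then `R(t0,τ) = R(t0,t1')` for `τ ∈ [t1',t1)`. Finally
`E(t1,Δu) = lim_{τ → t1⁻} E(τ,Δu)` lies in the closed subspace `R(t0,t1')`.
-/

open Submodule

theorem exists_forall_ge_eq_of_monotoneOn {R M ι : Type*} [Ring R] [AddCommGroup M]
    [Module R M] [IsNoetherian R M] [Preorder ι] {s : Set ι} (hs : s.Nonempty)
    {S : ι → Submodule R M} (hS : MonotoneOn S s) :
    ∃ i ∈ s, ∀ j ∈ s, i ≤ j → S j = S i := by
  obtain ⟨_, ⟨i, hi, rfl⟩, hmax⟩ :=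
    set_has_maximal_iff_noetherian.2 ‹_› (S '' s) (hs.image S)
  exact ⟨i, hi, fun j hj hij =>
    ((hS hi hj hij).lt_or_eq.resolve_left (hmax _ ⟨j, hj, rfl⟩)).symm⟩

section Controls

variable {k : ℕ} {u v : ℝ → Fin k → ℝ}

theorem isControl_zero : IsControl k 0 :=
  ⟨measurable_const, 0, .of_forall fun _ => by simp⟩

theorem IsControl.add (hu : IsControl k u) (hv : IsControl k v) : IsControl k (u + v) := by
  obtain ⟨hum, Cu, hCu⟩ := hu
  obtain ⟨hvm, Cv, hCv⟩ := hv
  refine ⟨hum.add hvm, Cu + Cv, ?_⟩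
  filter_upwards [hCu, hCv] with t hut hvt
  exact (norm_add_le _ _).trans (add_le_add hut hvt)

theorem IsControl.smul (hu : IsControl k u) (c : ℝ) : IsControl k (c • u) := by
  obtain ⟨hum, Cu, hCu⟩ := hu
  refine ⟨hum.const_smul c, ‖c‖ * Cu, ?_⟩
  filter_upwards [hCu] with t hut
  rw [Pi.smul_apply, norm_smul]
  exact mul_le_mul_of_nonneg_left hut (norm_nonneg c)

theorem IsControl.indicator (hu : IsControl k u) {s : Set ℝ} (hs : MeasurableSet s) :
    IsControl k (s.indicator u) := by
  obtain ⟨hum, Cu, hCu⟩ := hu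
  exact ⟨hum.indicator hs, Cu, hCu.mono fun t hut => (norm_indicator_le_norm_self u t).trans hut⟩

end Controls

section EndpointMap

variable {k m : ℕ} {A : ℝ → Matrix (Fin m) (Fin k) ℝ} {C a b : ℝ}

theorem integrableOn_mulVec (hAmeas : ∀ i j, Measurable fun t => A t i j) {s : Set ℝ}
    (hs : MeasurableSet s) (hs_fin : volume s ≠ ⊤) (hA : ∀ t ∈ s, ∀ i j, |A t i j| ≤ C)
    {u : ℝ → Fin k → ℝ} (hu : IsControl k u) :
    IntegrableOn (fun t => (A t).mulVec (u t)) s := by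
  obtain ⟨hum, Cu, hCu⟩ := hu
  refine integrable_pi_iff.2 fun i => ?_
  simp only [Matrix.mulVec, dotProduct]
  refine integrable_finsetSum _ fun j _ => Integrable.mul_bdd (c := Cu) ?_
    ((measurable_pi_apply j).comp hum).aestronglyMeasurable ?_
  · exact Measure.integrableOn_of_bounded hs_fin (hAmeas i j).aestronglyMeasurable
      ((ae_restrict_iff' hs).2 (.of_forall fun t ht => (Real.norm_eq_abs _).trans_le (hA t ht i j)))
  · filter_upwards [ae_restrict_of_ae hCu] with t hut
    exact (norm_le_pi_norm (u t) j).trans hut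

theorem coe_span_reach (hAmeas : ∀ i j, Measurable fun t => A t i j)
    (hA : ∀ t ∈ uIcc a b, ∀ i j, |A t i j| ≤ C) :
    (span ℝ (reach k m A a b) : Set (Fin m → ℝ)) = reach k m A a b := by
  have hint {u : ℝ → Fin k → ℝ} (hu : IsControl k u) :
      IntervalIntegrable (fun t => (A t).mulVec (u t)) volume a b :=
    (integrableOn_mulVec hAmeas measurableSet_uIcc isCompact_uIcc.measure_ne_top hA hu
      ).intervalIntegrable
  let S : Submodule ℝ (Fin m → ℝ) :=
    { carrier := reach k m A a b
      add_mem' := by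
        rintro _ _ ⟨u, hu, rfl⟩ ⟨v, hv, rfl⟩
        refine ⟨u + v, hu.add hv, ?_⟩
        simp only [epMap, Pi.add_apply, Matrix.mulVec_add]
        exact intervalIntegral.integral_add (hint hu) (hint hv)
      zero_mem' := ⟨0, isControl_zero, by simp [epMap]⟩
      smul_mem' := by
        rintro c _ ⟨u, hu, rfl⟩
        refine ⟨c • u, hu.smul c, ?_⟩
        simp only [epMap, Pi.smul_apply, Matrix.mulVec_smul]
        exact intervalIntegral.integral_smul c _ }
  exact congrArg SetLike.coe (span_eq S)

theorem reach_mono_right {c : ℝ} (hab : a ≤ b) (hbc : b ≤ c) :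
    reach k m A a b ⊆ reach k m A a c := by
  rintro _ ⟨u, hu, rfl⟩
  refine ⟨(Iic b).indicator u, hu.indicator measurableSet_Iic, ?_⟩
  have hmulVec (t : ℝ) :
      (A t).mulVec ((Iic b).indicator u t) = (Iic b).indicator (fun t => (A t).mulVec (u t)) t := by
    by_cases ht : t ∈ Iic b <;> simp [ht]
  simp only [epMap, hmulVec, intervalIntegral.integral_of_le hab,
    intervalIntegral.integral_of_le (hab.trans hbc), setIntegral_indicator measurableSet_Iic,
    Ioc_inter_Iic, min_eq_right hbc]

theorem continuousOn_epMap (hAmeas : ∀ i j, Measurable fun t => A t i j)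
    (hA : ∀ t ∈ uIcc a b, ∀ i j, |A t i j| ≤ C) {u : ℝ → Fin k → ℝ} (hu : IsControl k u) :
    ContinuousOn (fun τ => epMap k m A a τ u) (uIcc a b) :=
  intervalIntegral.continuousOn_primitive_interval
    (integrableOn_mulVec hAmeas measurableSet_uIcc isCompact_uIcc.measure_ne_top hA hu)

theorem reach_subset_of_isClosed (hAmeas : ∀ i j, Measurable fun t => A t i j)
    (hA : ∀ t ∈ Icc a b, ∀ i j, |A t i j| ≤ C) {c : ℝ} (hac : a ≤ c) (hcb : c < b)
    {S : Set (Fin m → ℝ)} (hS : IsClosed S) (h : ∀ τ ∈ Ico c b, reach k m A a τ ⊆ S) :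
    reach k m A a b ⊆ S := by
  rintro _ ⟨u, hu, rfl⟩
  have hab : a ≤ b := hac.trans hcb.le
  have hcont := continuousOn_epMap hAmeas (by rwa [uIcc_of_le hab]) hu
  rw [uIcc_of_le hab] at hcont
  have hb : b ∈ closure (Ico c b) := by
    rw [closure_Ico hcb.ne]
    exact right_mem_Icc.2 hcb.le
  exact hS.closure_subset <|
    ((hcont b (right_mem_Icc.2 hab)).mono (Ico_subset_Icc_self.trans (Icc_subset_Icc_left hac))
      ).mem_closure hb fun τ hτ => h τ hτ ⟨u, hu, rfl⟩

end EndpointMap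

/-- **Proposition 3.2 (iii).** There exists `t1' ∈ (t0,t1)` such that
`R(t0,τ) = R(t0,t1)` for every `τ ∈ (t1',t1]`: the reachable set stabilizes
before the final time. -/
theorem reach_stabilizes
    (t0 t1 : ℝ) (ht : t0 < t1) (k m : ℕ)
    (A : ℝ → Matrix (Fin m) (Fin k) ℝ)
    (hAmeas : ∀ i j, Measurable fun t => A t i j)
    (hAbdd : ∃ C : ℝ, ∀ t ∈ Set.Icc t0 t1, ∀ i j, |A t i j| ≤ C) :
    ∃ t1' ∈ Set.Ioo t0 t1, ∀ τ ∈ Set.Ioc t1' t1,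
      reach k m A t0 τ = reach k m A t0 t1 := by
  obtain ⟨C, hA⟩ := hAbdd
  obtain ⟨t1', ht1', hstab⟩ := exists_forall_ge_eq_of_monotoneOn (nonempty_Ioo.2 ht)
    (S := fun τ => span ℝ (reach k m A t0 τ))
    fun τ hτ _ _ hττ' => span_mono (reach_mono_right hτ.1.le hττ')
  have hspan : (span ℝ (reach k m A t0 t1') : Set (Fin m → ℝ)) = reach k m A t0 t1' :=
    coe_span_reach hAmeas fun t htI =>
      hA t (uIcc_subset_Icc (left_mem_Icc.2 ht.le) (Ioo_subset_Icc_self ht1') htI)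
  have hfinal : reach k m A t0 t1 ⊆ reach k m A t0 t1' := by
    rw [← hspan]
    refine reach_subset_of_isClosed hAmeas hA ht1'.1.le ht1'.2 (closed_of_finiteDimensional _)
      fun τ hτ => ?_
    rw [← hstab τ ⟨ht1'.1.trans_le hτ.1, hτ.2⟩ hτ.1]
    exact subset_span
  exact ⟨t1', ht1', fun τ hτ => (reach_mono_right (ht1'.1.trans hτ.1).le hτ.2).antisymm
    (hfinal.trans (reach_mono_right ht1'.1.le hτ.1.le))⟩
end
end

section
/- Bellman's inequality for the characteristic optimal control problem: let Δu be a control and let t ≤ t' be points of [t0,t1]. If both sets { C(t,w) : w a control with E(t,w) = E(t,Δu) } and { C(t',w) : w a control with E(t',w) = E(t',Δu) } are bounded below in ℝ, then C(t,Δu) − Q(t, E(t,Δu)) ≤ C(t',Δu) − Q(t', E(t',Δu)); i.e., the deviation of the cost of Δu from the value function is non-decreasing in time. (Lemma 4.5.) -/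
open MeasureTheory Set

noncomputable section

/-- The quadratic cost `C_a(τ, Δu) = ∫_a^τ ⟨Δu(t), W(t)·E_a(t,Δu)⟩ dt` of the
characteristic optimal control problem. -/
def cost (k m : ℕ) (A : ℝ → Matrix (Fin m) (Fin k) ℝ)
    (W : ℝ → Matrix (Fin k) (Fin m) ℝ) (a τ : ℝ) (u : ℝ → Fin k → ℝ) : ℝ :=
  ∫ t in a..τ, dotProduct (u t) ((W t).mulVec (epMap k m A a t u))

/-- The set of costs of controls steering the system from `0` at time `a`
to `v` at time `τ`. -/
def costSet (k m : ℕ) (A : ℝ → Matrix (Fin m) (Fin k) ℝ)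
    (W : ℝ → Matrix (Fin k) (Fin m) ℝ) (a τ : ℝ) (v : Fin m → ℝ) : Set ℝ :=
  { c | ∃ u, IsControl k u ∧ epMap k m A a τ u = v ∧ cost k m A W a τ u = c }

/-!
If a control `w` reaches `E(t,Δu)` at time `t`, the control equal to `w` up to `t` and to `Δu`
afterwards reaches `E(t',Δu)` at time `t'`: after `t` both trajectories integrate the same
velocity from the same point. Its cost is `C(t,w) + (C(t',Δu) - C(t,Δu))`, so
`Q(t',E(t',Δu)) ≤ Q(t,E(t,Δu)) + C(t',Δu) - C(t,Δu)`. The integrability needed to split the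
integrals at `t` holds because entries of `A`, `W`, controls and the continuous trajectory are
all essentially bounded on `[t0,t1]`.
-/

open scoped ENNReal Interval Matrix

section EssentiallyBounded

variable {α : Type*} [MeasurableSpace α] {μ : Measure α}

theorem memLp_top_restrict_of_norm_le {E : Type*} [NormedAddCommGroup E] {f : α → E} {s : Set α}
    {C : ℝ} (hf : AEStronglyMeasurable f (μ.restrict s)) (hs : MeasurableSet s)
    (hC : ∀ x ∈ s, ‖f x‖ ≤ C) : MemLp f ∞ (μ.restrict s) :=
  memLp_top_of_bound hf C ((ae_restrict_iff' hs).2 (ae_of_all _ hC))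

theorem ContinuousOn.memLp_top_restrict [TopologicalSpace α] [OpensMeasurableSpace α]
    [SecondCountableTopology α] {E : Type*} [NormedAddCommGroup E] {f : α → E} {s : Set α}
    (hf : ContinuousOn f s) (hs : IsCompact s) (hs' : MeasurableSet s) :
    MemLp f ∞ (μ.restrict s) :=
  have ⟨_, hC⟩ := hs.exists_bound_of_continuousOn hf
  memLp_top_restrict_of_norm_le (hf.aestronglyMeasurable hs') hs' hC

variable {ι κ : Type*}

theorem memLp_top_restrict_entry {M : α → Matrix ι κ ℝ} {s : Set α} (hs : MeasurableSet s)
    (hmeas : ∀ i j, Measurable fun x => M x i j) (hbdd : ∃ C : ℝ, ∀ x ∈ s, ∀ i j, |M x i j| ≤ C)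
    (i : ι) (j : κ) : MemLp (fun x => M x i j) ∞ (μ.restrict s) :=
  have ⟨_, hC⟩ := hbdd
  memLp_top_restrict_of_norm_le (hmeas i j).aestronglyMeasurable hs fun x hx => hC x hx i j

variable [Fintype κ]

theorem memLp_top_dotProduct {u v : α → κ → ℝ} (hu : MemLp u ∞ μ) (hv : MemLp v ∞ μ) :
    MemLp (fun x => u x ⬝ᵥ v x) ∞ μ :=
  memLp_finsetSum _ fun j _ => (hv.eval j).mul' (hu.eval j)

theorem memLp_top_mulVec [Fintype ι] {M : α → Matrix ι κ ℝ} {v : α → κ → ℝ}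
    (hM : ∀ i j, MemLp (fun x => M x i j) ∞ μ) (hv : MemLp v ∞ μ) :
    MemLp (fun x => M x *ᵥ v x) ∞ μ :=
  memLp_pi_iff.2 fun i => memLp_top_dotProduct (memLp_pi_iff.2 (hM i)) hv

end EssentiallyBounded

theorem intervalIntegral.integral_sub_integral_eq_of_eqOn {E : Type*} [NormedAddCommGroup E]
    [NormedSpace ℝ E] {f g : ℝ → E} {a b c d : ℝ} (hf : IntegrableOn f (Icc a b))
    (hg : IntegrableOn g (Icc a b)) (hc : c ∈ Icc a b) (hd : d ∈ Icc a b)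
    (hfg : EqOn f g (Ι c d)) :
    (∫ x in a..d, f x) - ∫ x in a..c, f x = (∫ x in a..d, g x) - ∫ x in a..c, g x := by
  have hsub : ∀ e ∈ Icc a b, uIcc a e ⊆ Icc a b := fun e he =>
    uIcc_subset_Icc (left_mem_Icc.2 (he.1.trans he.2)) he
  rw [integral_interval_sub_left ((hf.mono_set (hsub d hd)).intervalIntegrable)
      ((hf.mono_set (hsub c hc)).intervalIntegrable),
    integral_interval_sub_left ((hg.mono_set (hsub d hd)).intervalIntegrable)
      ((hg.mono_set (hsub c hc)).intervalIntegrable)]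
  exact integral_congr_ae (ae_of_all _ hfg)

variable {k m : ℕ} {A : ℝ → Matrix (Fin m) (Fin k) ℝ} {W : ℝ → Matrix (Fin k) (Fin m) ℝ}
  {u w : ℝ → Fin k → ℝ} {a s t t' t0 t1 : ℝ}

theorem IsControl.memLp_top (hu : IsControl k u) : MemLp u ∞ volume :=
  have ⟨C, hC⟩ := hu.2
  memLp_top_of_bound hu.1.aestronglyMeasurable C hC

theorem IsControl.piecewise (hw : IsControl k w) (hu : IsControl k u) (t : ℝ) :
    IsControl k ((Iic t).piecewise w u) := by
  obtain ⟨hw, Cw, hCw⟩ := hw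
  obtain ⟨hu, Cu, hCu⟩ := hu
  refine ⟨hw.piecewise measurableSet_Iic hu, max Cw Cu, ?_⟩
  filter_upwards [hCw, hCu] with s hws hus
  by_cases hs : s ∈ Iic t
  · simpa [hs] using le_max_of_le_left hws
  · simpa [hs] using le_max_of_le_right hus

theorem integrableOn_mulVec_s5
    (hA : ∀ i j, MemLp (fun s => A s i j) ∞ (volume.restrict (Icc t0 t1)))
    (hu : IsControl k u) : IntegrableOn (fun s => A s *ᵥ u s) (Icc t0 t1) :=
  (memLp_top_mulVec hA (hu.memLp_top.restrict _)).integrable le_top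

theorem continuousOn_epMap_s5 (h01 : t0 ≤ t1)
    (hA : ∀ i j, MemLp (fun s => A s i j) ∞ (volume.restrict (Icc t0 t1)))
    (hu : IsControl k u) : ContinuousOn (fun τ => epMap k m A t0 τ u) (Icc t0 t1) := by
  rw [← uIcc_of_le h01]
  exact intervalIntegral.continuousOn_primitive_interval
    (uIcc_of_le h01 ▸ integrableOn_mulVec_s5 hA hu)

theorem integrableOn_cost_integrand (h01 : t0 ≤ t1)
    (hA : ∀ i j, MemLp (fun s => A s i j) ∞ (volume.restrict (Icc t0 t1)))
    (hW : ∀ i j, MemLp (fun s => W s i j) ∞ (volume.restrict (Icc t0 t1)))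
    (hu : IsControl k u) :
    IntegrableOn (fun s => u s ⬝ᵥ W s *ᵥ epMap k m A t0 s u) (Icc t0 t1) :=
  (memLp_top_dotProduct (hu.memLp_top.restrict _) (memLp_top_mulVec hW
    ((continuousOn_epMap_s5 h01 hA hu).memLp_top_restrict isCompact_Icc
      measurableSet_Icc))).integrable le_top

theorem epMap_piecewise_Iic (ha : a ≤ t) (hs : s ≤ t) :
    epMap k m A a s ((Iic t).piecewise w u) = epMap k m A a s w :=
  intervalIntegral.integral_congr fun x hx => by
    simp only [piecewise_eqOn (Iic t) w u (show x ≤ t from hx.2.trans (max_le ha hs))]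

theorem cost_piecewise_Iic (ha : a ≤ t) :
    cost k m A W a t ((Iic t).piecewise w u) = cost k m A W a t w :=
  intervalIntegral.integral_congr fun x hx => by
    have hxt : x ≤ t := hx.2.trans (max_le ha le_rfl)
    simp only [piecewise_eqOn (Iic t) w u hxt, epMap_piecewise_Iic ha hxt]

theorem eqOn_piecewise_Iic_uIoc (hs : t ≤ s) : EqOn ((Iic t).piecewise w u) u (Ι t s) :=
  (piecewise_eqOn_compl (Iic t) w u).mono fun x hx => by
    rw [uIoc_of_le hs] at hx
    exact not_le.2 hx.1

theorem epMap_piecewise_Iic_of_ge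
    (hA : ∀ i j, MemLp (fun s => A s i j) ∞ (volume.restrict (Icc t0 t1)))
    (hw : IsControl k w) (hu : IsControl k u) (ht : t ∈ Icc t0 t1) (hs : s ∈ Icc t t1)
    (hE : epMap k m A t0 t w = epMap k m A t0 t u) :
    epMap k m A t0 s ((Iic t).piecewise w u) = epMap k m A t0 s u := by
  have hincr := intervalIntegral.integral_sub_integral_eq_of_eqOn
    (integrableOn_mulVec_s5 hA (hw.piecewise hu t)) (integrableOn_mulVec_s5 hA hu) ht
    ⟨ht.1.trans hs.1, hs.2⟩ fun x hx => congrArg (A x *ᵥ ·) (eqOn_piecewise_Iic_uIoc hs.1 hx)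
  rwa [← epMap, ← epMap, ← epMap, ← epMap, epMap_piecewise_Iic ht.1 le_rfl, hE,
    sub_left_inj] at hincr

theorem cost_sub_cost_piecewise_Iic
    (hA : ∀ i j, MemLp (fun s => A s i j) ∞ (volume.restrict (Icc t0 t1)))
    (hW : ∀ i j, MemLp (fun s => W s i j) ∞ (volume.restrict (Icc t0 t1)))
    (hw : IsControl k w) (hu : IsControl k u) (ht : t ∈ Icc t0 t1) (ht' : t' ∈ Icc t t1)
    (hE : epMap k m A t0 t w = epMap k m A t0 t u) :
    cost k m A W t0 t' ((Iic t).piecewise w u) - cost k m A W t0 t ((Iic t).piecewise w u) =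
      cost k m A W t0 t' u - cost k m A W t0 t u := by
  have h01 : t0 ≤ t1 := ht.1.trans ht.2
  refine intervalIntegral.integral_sub_integral_eq_of_eqOn
    (integrableOn_cost_integrand h01 hA hW (hw.piecewise hu t))
    (integrableOn_cost_integrand h01 hA hW hu) ht ⟨ht.1.trans ht'.1, ht'.2⟩ fun x hx => ?_
  have hx' : x ∈ Icc t t1 := by
    rw [uIoc_of_le ht'.1] at hx
    exact ⟨hx.1.le, hx.2.trans ht'.2⟩
  simp only [eqOn_piecewise_Iic_uIoc ht'.1 hx, epMap_piecewise_Iic_of_ge hA hw hu ht hx' hE]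

theorem add_cost_sub_cost_mem_costSet
    (hA : ∀ i j, MemLp (fun s => A s i j) ∞ (volume.restrict (Icc t0 t1)))
    (hW : ∀ i j, MemLp (fun s => W s i j) ∞ (volume.restrict (Icc t0 t1)))
    (hu : IsControl k u) (ht : t ∈ Icc t0 t1) (ht' : t' ∈ Icc t t1) {c : ℝ}
    (hc : c ∈ costSet k m A W t0 t (epMap k m A t0 t u)) :
    c + (cost k m A W t0 t' u - cost k m A W t0 t u) ∈
      costSet k m A W t0 t' (epMap k m A t0 t' u) := by
  obtain ⟨w, hw, hE, rfl⟩ := hc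
  refine ⟨_, hw.piecewise hu t, epMap_piecewise_Iic_of_ge hA hw hu ht ht' hE, ?_⟩
  rw [← cost_sub_cost_piecewise_Iic hA hW hw hu ht ht' hE, cost_piecewise_Iic ht.1]
  ring

theorem bellman_inequality_general
    (t0 t1 : ℝ) (k m : ℕ)
    (A : ℝ → Matrix (Fin m) (Fin k) ℝ)
    (hAmeas : ∀ i j, Measurable fun t => A t i j)
    (hAbdd : ∃ C : ℝ, ∀ t ∈ Set.Icc t0 t1, ∀ i j, |A t i j| ≤ C)
    (W : ℝ → Matrix (Fin k) (Fin m) ℝ)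
    (hWmeas : ∀ i j, Measurable fun t => W t i j)
    (hWbdd : ∃ C : ℝ, ∀ t ∈ Set.Icc t0 t1, ∀ i j, |W t i j| ≤ C)
    (Δu : ℝ → Fin k → ℝ) (hΔu : IsControl k Δu)
    (t t' : ℝ) (htt : t ∈ Set.Icc t0 t1) (htt' : t' ∈ Set.Icc t0 t1)
    (hle : t ≤ t')
    (hbdd' : BddBelow (costSet k m A W t0 t' (epMap k m A t0 t' Δu))) :
    cost k m A W t0 t Δu - sInf (costSet k m A W t0 t (epMap k m A t0 t Δu)) ≤
      cost k m A W t0 t' Δu -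
        sInf (costSet k m A W t0 t' (epMap k m A t0 t' Δu)) := by
  have hA := memLp_top_restrict_entry (μ := volume) measurableSet_Icc hAmeas hAbdd
  have hW := memLp_top_restrict_entry (μ := volume) measurableSet_Icc hWmeas hWbdd
  have hinf : sInf (costSet k m A W t0 t' (epMap k m A t0 t' Δu)) -
      (cost k m A W t0 t' Δu - cost k m A W t0 t Δu) ≤
        sInf (costSet k m A W t0 t (epMap k m A t0 t Δu)) :=
    le_csInf ⟨_, Δu, hΔu, rfl, rfl⟩ fun c hc => sub_le_iff_le_add.2 (csInf_le hbdd'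
      (add_cost_sub_cost_mem_costSet hA hW hΔu htt ⟨hle, htt'.2⟩ hc))
  linarith

/-- **Lemma 4.5 (Bellman's inequality).** For a control `Δu` and `t ≤ t'` in
`[t0,t1]`, if the cost sets over the endpoints `E(t,Δu)` and `E(t',Δu)` are
bounded below, then the deviation of the cost of `Δu` from the value function
is non-decreasing in time:
`C(t,Δu) − Q(t,E(t,Δu)) ≤ C(t',Δu) − Q(t',E(t',Δu))`. -/
theorem bellman_inequality
    (t0 t1 : ℝ) (ht : t0 < t1) (k m : ℕ)
    (A : ℝ → Matrix (Fin m) (Fin k) ℝ)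
    (hAmeas : ∀ i j, Measurable fun t => A t i j)
    (hAbdd : ∃ C : ℝ, ∀ t ∈ Set.Icc t0 t1, ∀ i j, |A t i j| ≤ C)
    (W : ℝ → Matrix (Fin k) (Fin m) ℝ)
    (hWmeas : ∀ i j, Measurable fun t => W t i j)
    (hWbdd : ∃ C : ℝ, ∀ t ∈ Set.Icc t0 t1, ∀ i j, |W t i j| ≤ C)
    (Δu : ℝ → Fin k → ℝ) (hΔu : IsControl k Δu)
    (t t' : ℝ) (htt : t ∈ Set.Icc t0 t1) (htt' : t' ∈ Set.Icc t0 t1)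
    (hle : t ≤ t')
    (hbdd : BddBelow (costSet k m A W t0 t (epMap k m A t0 t Δu)))
    (hbdd' : BddBelow (costSet k m A W t0 t' (epMap k m A t0 t' Δu))) :
    cost k m A W t0 t Δu - sInf (costSet k m A W t0 t (epMap k m A t0 t Δu)) ≤
      cost k m A W t0 t' Δu -
        sInf (costSet k m A W t0 t' (epMap k m A t0 t' Δu)) :=
  bellman_inequality_general t0 t1 k m A hAmeas hAbdd W hWmeas hWbdd Δu hΔu t t' htt htt' hle hbdd'
end
end

section
/- Assume that for every v in the range of L the set { C(x) : x ∈ E, L x = v } is bounded below in ℝ. Then the value function is quadratic: there exists a symmetric bilinear form Φ : F × F → ℝ such that Q(v) = Φ(v,v) for every v in the range of L. (Theorem 4.9, first assertion: the minimal 2-jet is quadratic in the endpoint.) -/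
/-!
The pairs of points `(p, r)` in the fibres over `v + w` and `v - w` correspond to the pairs
`(x, y) = ((p + r) / 2, (p - r) / 2)` in the fibres over `v` and `w`, and
`C(p) + C(r) = 2 (C(x) + C(y))`. Taking infima, the value function `Q` satisfies the parallelogram
law; it is also `2`-homogeneous, because fibres rescale and boundedness over `0` forces `C ≥ 0` on
`ker L`. The parallelogram law makes the polar form of `Q` additive, and it is bounded above along
lines since `Q(t v + w) ≤ C(t x + y)`, a polynomial in `t`; an additive function on `ℝ` bounded
near `0` is continuous, hence linear. So `Q` is a quadratic form on `range L`, and its polar form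
pulled back by a projection onto `range L` is the required `Φ`.
-/

noncomputable section

/-- The set of values of the quadratic cost `C(x) = B(x,x)` over the fiber
`{x : L x = v}`. Its infimum (when finite) is the value function
`Q(v)` ('minimal 2-jet'). -/
def fiberCosts {E F : Type*} [AddCommGroup E] [Module ℝ E]
    [AddCommGroup F] [Module ℝ F]
    (L : E →ₗ[ℝ] F) (B : E →ₗ[ℝ] E →ₗ[ℝ] ℝ) (v : F) : Set ℝ :=
  { c | ∃ x : E, L x = v ∧ B x x = c }

open Set Pointwise QuadraticMap

theorem AddMonoidHom.map_real_eq_mul_of_bddAbove (f : ℝ →+ ℝ) (hf : BddAbove (f '' Icc (-1) 1))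
    (t : ℝ) : f t = t * f 1 := by
  obtain ⟨M, hM⟩ := hf
  have hbdd : Bornology.IsBounded (f '' Icc (-1) 1) := by
    refine isBounded_iff_bddBelow_bddAbove.2 ⟨⟨-M, ?_⟩, ⟨M, hM⟩⟩
    rintro _ ⟨s, hs, rfl⟩
    have := hM ⟨-s, ⟨neg_le_neg hs.2, neg_le.1 hs.1⟩, rfl⟩
    rw [map_neg] at this
    linarith
  have hcont := f.continuous_of_isBounded_nhds_zero (Icc_mem_nhds (by norm_num) one_pos) hbdd
  simpa using map_real_smul f hcont t 1

section Parallelogram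

variable {M : Type*} [AddCommGroup M] {q : M → ℝ}

-- The four instances of the parallelogram law below add up to the identity
-- `q (x + x' + y) - q (x + x') - q (x + y) - q (x' + y) + q x + q x' + q y = 0`.
theorem polar_add_left_of_parallelogram
    (hq : ∀ x y, q (x + y) + q (x - y) = 2 * (q x + q y)) (x x' y : M) :
    polar q (x + x') y = polar q x y + polar q x' y := by
  have h₁ := hq (x + y) x'
  have h₂ := hq (x' + y) x
  have h₃ := hq y (x - x')
  have h₄ := hq x x'
  rw [show x + y + x' = x + x' + y by abel] at h₁
  rw [show x' + y + x = x + x' + y by abel] at h₂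
  rw [show y + (x - x') = x + y - x' by abel, show y - (x - x') = x' + y - x by abel] at h₃
  simp only [polar]
  linarith

theorem polar_smul_left_of_parallelogram [Module ℝ M]
    (hq : ∀ x y, q (x + y) + q (x - y) = 2 * (q x + q y)) {x y : M}
    (hbdd : BddAbove ((fun t : ℝ ↦ polar q (t • x) y) '' Icc (-1) 1)) (t : ℝ) :
    polar q (t • x) y = t * polar q x y := by
  let f : ℝ →+ ℝ := AddMonoidHom.mk' (fun t ↦ polar q (t • x) y) fun s t ↦ by
    simp only [add_smul, polar_add_left_of_parallelogram hq]
  simpa [f] using f.map_real_eq_mul_of_bddAbove hbdd t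

end Parallelogram

section ValueFunction

variable {E F : Type*} [AddCommGroup E] [Module ℝ E] [AddCommGroup F] [Module ℝ F]
  {L : E →ₗ[ℝ] F} {B : E →ₗ[ℝ] E →ₗ[ℝ] ℝ}

-- `sInf` is `0` on an empty or unbounded-below set, so `valueFunction L B v` is only meaningful
-- when `fiberCosts L B v` is nonempty and bounded below.
variable (L B) in
def valueFunction (v : F) : ℝ := sInf (fiberCosts L B v)

theorem valueFunction_le {x : E} {v : F} (hbdd : BddBelow (fiberCosts L B v)) (hx : L x = v) :
    valueFunction L B v ≤ B x x :=
  csInf_le hbdd ⟨x, hx, rfl⟩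

theorem fiberCosts_nonempty (hL : Function.Surjective L) (v : F) : (fiberCosts L B v).Nonempty :=
  let ⟨x, hx⟩ := hL v; ⟨B x x, x, hx, rfl⟩

theorem fiberCosts_smul {t : ℝ} (ht : t ≠ 0) (v : F) :
    fiberCosts L B (t • v) = t ^ 2 • fiberCosts L B v := by
  ext c
  constructor
  · rintro ⟨x, hx, rfl⟩
    refine ⟨B (t⁻¹ • x) (t⁻¹ • x), ⟨t⁻¹ • x, by simp [hx, ht], rfl⟩, ?_⟩
    simp only [map_smul, LinearMap.smul_apply, smul_eq_mul]
    field_simp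
  · rintro ⟨_, ⟨x, hx, rfl⟩, rfl⟩
    exact ⟨t • x, by simp [hx], by simp; ring⟩

theorem nonneg_of_mem_fiberCosts_zero (hbdd : BddBelow (fiberCosts L B 0)) {c : ℝ}
    (hc : c ∈ fiberCosts L B 0) : 0 ≤ c := by
  obtain ⟨m, hm⟩ := hbdd
  obtain ⟨x, hx, rfl⟩ := hc
  by_contra! hneg
  have hmx : m ≤ B x x := hm ⟨x, hx, rfl⟩
  -- the cost of `(2m / C(x)) • x` is `4 m² / C(x) < m`
  have := hm ⟨(2 * m / B x x) • x, by simp [hx], rfl⟩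
  simp only [map_smul, LinearMap.smul_apply, smul_eq_mul] at this
  rw [div_mul_cancel₀ _ hneg.ne, div_mul_eq_mul_div, le_div_iff_of_neg hneg] at this
  nlinarith

theorem valueFunction_zero (hbdd : BddBelow (fiberCosts L B 0)) : valueFunction L B 0 = 0 :=
  IsLeast.csInf_eq ⟨⟨0, map_zero L, by simp⟩, fun _ ↦ nonneg_of_mem_fiberCosts_zero hbdd⟩

theorem valueFunction_smul (hbdd : BddBelow (fiberCosts L B 0)) (t : ℝ) (v : F) :
    valueFunction L B (t • v) = t ^ 2 * valueFunction L B v := by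
  rcases eq_or_ne t 0 with rfl | ht
  · simp [valueFunction_zero hbdd]
  · rw [valueFunction, fiberCosts_smul ht, Real.sInf_smul_of_nonneg (sq_nonneg t)]
    rfl

theorem bilin_diag_parallelogram (x y : E) :
    B (x + y) (x + y) + B (x - y) (x - y) = 2 * (B x x + B y y) := by
  simp only [map_add, map_sub, LinearMap.add_apply, LinearMap.sub_apply]
  ring

theorem fiberCosts_add_add_fiberCosts_sub (v w : F) :
    fiberCosts L B (v + w) + fiberCosts L B (v - w) =
      (2 : ℝ) • (fiberCosts L B v + fiberCosts L B w) := by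
  ext c
  constructor
  · rintro ⟨_, ⟨p, hp, rfl⟩, _, ⟨r, hr, rfl⟩, rfl⟩
    have hsum : (2 : ℝ)⁻¹ • (p + r) + (2 : ℝ)⁻¹ • (p - r) = p := by module
    have hdiff : (2 : ℝ)⁻¹ • (p + r) - (2 : ℝ)⁻¹ • (p - r) = r := by module
    refine ⟨_, ⟨_, ⟨(2 : ℝ)⁻¹ • (p + r), ?_, rfl⟩, _, ⟨(2 : ℝ)⁻¹ • (p - r), ?_, rfl⟩, rfl⟩, ?_⟩
    · simp only [map_smul, map_add, hp, hr]; module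
    · simp only [map_smul, map_sub, hp, hr]; module
    · dsimp only
      rw [smul_eq_mul, ← bilin_diag_parallelogram, hsum, hdiff]
  · rintro ⟨_, ⟨_, ⟨x, hx, rfl⟩, _, ⟨y, hy, rfl⟩, rfl⟩, rfl⟩
    exact ⟨_, ⟨x + y, by simp [hx, hy], rfl⟩, _, ⟨x - y, by simp [hx, hy], rfl⟩,
      bilin_diag_parallelogram x y⟩

theorem valueFunction_parallelogram (hL : Function.Surjective L)
    (hbdd : ∀ v, BddBelow (fiberCosts L B v)) (v w : F) :
    valueFunction L B (v + w) + valueFunction L B (v - w) =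
      2 * (valueFunction L B v + valueFunction L B w) := by
  have hne := fiberCosts_nonempty (B := B) hL
  rw [valueFunction, valueFunction, ← csInf_add (hne _) (hbdd _) (hne _) (hbdd _),
    fiberCosts_add_add_fiberCosts_sub, Real.sInf_smul_of_nonneg zero_le_two,
    csInf_add (hne _) (hbdd _) (hne _) (hbdd _)]
  rfl

theorem bddAbove_polar_valueFunction_smul_left (hL : Function.Surjective L)
    (hbdd : ∀ v, BddBelow (fiberCosts L B v)) (v w : F) :
    BddAbove ((fun t : ℝ ↦ polar (valueFunction L B) (t • v) w) '' Icc (-1) 1) := by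
  obtain ⟨x, rfl⟩ := hL v
  obtain ⟨y, rfl⟩ := hL w
  set g : ℝ → ℝ := fun t ↦ t ^ 2 * (B x x - valueFunction L B (L x)) + t * (B x y + B y x) +
    B y y - valueFunction L B (L y)
  obtain ⟨M, hM⟩ := isCompact_Icc.bddAbove_image (f := g) (by fun_prop : Continuous g).continuousOn
  refine ⟨M, ?_⟩
  rintro _ ⟨t, ht, rfl⟩
  refine le_trans ?_ (hM ⟨t, ht, rfl⟩)
  have hcost : B (t • x + y) (t • x + y) = t ^ 2 * B x x + t * (B x y + B y x) + B y y := by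
    simp only [map_add, map_smul, LinearMap.add_apply, LinearMap.smul_apply, smul_eq_mul]
    ring
  have hle := valueFunction_le (hbdd (t • L x + L y)) (x := t • x + y) (by simp)
  simp only [polar, valueFunction_smul (hbdd 0), g]
  linarith

def valueQuadraticMap (hL : Function.Surjective L) (hbdd : ∀ v, BddBelow (fiberCosts L B v)) :
    QuadraticMap ℝ F ℝ :=
  QuadraticMap.ofPolar (valueFunction L B)
    (fun t v ↦ by rw [valueFunction_smul (hbdd 0), pow_two, smul_eq_mul])
    (polar_add_left_of_parallelogram (valueFunction_parallelogram hL hbdd))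
    (fun t v w ↦ polar_smul_left_of_parallelogram (valueFunction_parallelogram hL hbdd)
      (bddAbove_polar_valueFunction_smul_left hL hbdd v w) t)

theorem valueQuadraticMap_apply (hL : Function.Surjective L)
    (hbdd : ∀ v, BddBelow (fiberCosts L B v)) (v : F) :
    valueQuadraticMap hL hbdd v = valueFunction L B v :=
  rfl

theorem fiberCosts_rangeRestrict (v : LinearMap.range L) :
    fiberCosts L.rangeRestrict B v = fiberCosts L B v := by
  simp [fiberCosts, Subtype.ext_iff]

end ValueFunction

theorem minimal_two_jet_is_quadratic_general
    (E F : Type*) [AddCommGroup E] [Module ℝ E]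
    [AddCommGroup F] [Module ℝ F]
    (L : E →ₗ[ℝ] F) (B : E →ₗ[ℝ] E →ₗ[ℝ] ℝ)
    (hbdd : ∀ v ∈ LinearMap.range L, BddBelow (fiberCosts L B v)) :
    ∃ Φ : F →ₗ[ℝ] F →ₗ[ℝ] ℝ, (∀ v w : F, Φ v w = Φ w v) ∧
      ∀ v ∈ LinearMap.range L, sInf (fiberCosts L B v) = Φ v v := by
  have hbdd' : ∀ v, BddBelow (fiberCosts L.rangeRestrict B v) := fun v ↦ by
    rw [fiberCosts_rangeRestrict]
    exact hbdd v v.2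
  let Q := valueQuadraticMap L.surjective_rangeRestrict hbdd'
  obtain ⟨S, hS⟩ := (LinearMap.range L).exists_isCompl
  let π := (LinearMap.range L).projectionOnto S hS
  refine ⟨(QuadraticMap.associated Q).compl₁₂ π π, fun v w ↦ Q.associated_isSymm ℝ _ _, ?_⟩
  intro v hv
  rw [LinearMap.compl₁₂_apply, Submodule.projectionOnto_apply_left hS ⟨v, hv⟩,
    QuadraticMap.associated_eq_self_apply, valueQuadraticMap_apply, valueFunction,
    fiberCosts_rangeRestrict]

/-- **Theorem 4.9, first assertion.** If for every `v` in the range of `L` the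
set `{ C(x) : L x = v }` is bounded below, then the value function is
quadratic: there is a symmetric bilinear form `Φ` on `F` with
`Q(v) = Φ(v,v)` for every `v` in the range of `L`. -/
theorem minimal_two_jet_is_quadratic
    (E F : Type*) [AddCommGroup E] [Module ℝ E]
    [AddCommGroup F] [Module ℝ F] [FiniteDimensional ℝ F]
    (L : E →ₗ[ℝ] F) (B : E →ₗ[ℝ] E →ₗ[ℝ] ℝ)
    (hBsymm : ∀ x y : E, B x y = B y x)
    (hbdd : ∀ v ∈ LinearMap.range L, BddBelow (fiberCosts L B v)) :
    ∃ Φ : F →ₗ[ℝ] F →ₗ[ℝ] ℝ, (∀ v w : F, Φ v w = Φ w v) ∧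
      ∀ v ∈ LinearMap.range L, sInf (fiberCosts L B v) = Φ v v :=
  minimal_two_jet_is_quadratic_general E F L B hbdd
end
end

section
/- Assume the set { C(w) : w ∈ ker L } is bounded below. Then the set of solutions Sol := { u ∈ E : the set { C(x) : L x = L u } is bounded below and C(u) = Q(L u) } is a linear subspace of E. Moreover, for every v in the range of L, the set Sol(v) := { u ∈ Sol : L u = v } is either empty or equals u0 + Sol(0) for any u0 ∈ Sol(v), where Sol(0) := Sol ∩ ker L; i.e., Sol(v) is an affine space modelled on the vector space Sol(0). (Proposition 4.16.) -/
noncomputable section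

/-- The set of solutions of the characteristic optimal control problem:
controls realizing the infimum of the cost over their own fiber. -/
def Sol {E F : Type*} [AddCommGroup E] [Module ℝ E]
    [AddCommGroup F] [Module ℝ F]
    (L : E →ₗ[ℝ] F) (B : E →ₗ[ℝ] E →ₗ[ℝ] ℝ) : Set E :=
  { u | BddBelow (fiberCosts L B (L u)) ∧
        B u u = sInf (fiberCosts L B (L u)) }

section aux
variable {E F : Type*} [AddCommGroup E] [Module ℝ E]
    [AddCommGroup F] [Module ℝ F]
    (L : E →ₗ[ℝ] F) (B : E →ₗ[ℝ] E →ₗ[ℝ] ℝ)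

lemma psd_of_bdd (hbdd : BddBelow (fiberCosts L B 0)) :
    ∀ w : E, L w = 0 → 0 ≤ B w w := by
  intro w hw
  by_contra h
  push_neg at h
  obtain ⟨m, hm⟩ := hbdd
  have hm0 : m ≤ 0 := hm ⟨0, by simp, by simp⟩
  set a : ℝ := -(B w w) with ha
  have hapos : 0 < a := by rw [ha]; linarith
  set t : ℝ := Real.sqrt ((1 - m) / a) with ht
  have ht2 : t ^ 2 = (1 - m) / a := by
    rw [ht, Real.sq_sqrt]
    exact div_nonneg (by linarith) hapos.le
  have h1 : m ≤ B (t • w) (t • w) := hm ⟨t • w, by simp [hw], rfl⟩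
  have h2 : B (t • w) (t • w) = t ^ 2 * B w w := by
    simp [map_smul, smul_eq_mul]; ring
  rw [h2, ht2] at h1
  have heq : (1 - m) / a * B w w = m - 1 := by
    have : B w w = -a := by rw [ha]; ring
    rw [this]
    field_simp
    ring
  rw [heq] at h1
  linarith

lemma mem_sol_iff (hBsymm : ∀ x y : E, B x y = B y x)
    (hbdd : BddBelow (fiberCosts L B 0)) (u : E) :
    u ∈ Sol L B ↔ ∀ w : E, L w = 0 → B u w = 0 := by
  have psd := psd_of_bdd L B hbdd
  have hexp : ∀ w : E, L w = 0 → (∀ x, L x = 0 → B u x = 0) →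
      B (u + w) (u + w) = B u u + B w w := by
    intro w hw hu
    have h1 := hu w hw
    have h2 : B w u = 0 := (hBsymm w u).trans h1
    simp [map_add, h1, h2]
  constructor
  · rintro ⟨hb, hinf⟩ w hw
    have key : ∀ t : ℝ, 0 ≤ 2 * t * B u w + t ^ 2 * B w w := by
      intro t
      have hmem : B (u + t • w) (u + t • w) ∈ fiberCosts L B (L u) :=
        ⟨u + t • w, by simp [hw], rfl⟩
      have h1 : sInf (fiberCosts L B (L u)) ≤ B (u + t • w) (u + t • w) :=
        csInf_le hb hmem
      rw [← hinf] at h1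
      have h2 : B (u + t • w) (u + t • w)
          = B u u + 2 * t * B u w + t ^ 2 * B w w := by
        simp [map_add, map_smul, smul_eq_mul, hBsymm w u]; ring
      rw [h2] at h1
      linarith
    have hc : 0 ≤ B w w := psd w hw
    rcases eq_or_lt_of_le hc with hc0 | hc0
    · have h1 := key 1
      have h2 := key (-1)
      rw [← hc0] at h1 h2
      linarith
    · have h := key (-(B u w) / B w w)
      have heq : 2 * (-(B u w) / B w w) * B u w
          + (-(B u w) / B w w) ^ 2 * B w w = -(B u w ^ 2) / B w w := by
        field_simp
        ring
      rw [heq] at h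
      have h2 : B u w ^ 2 ≤ 0 := by
        by_contra hcon
        push_neg at hcon
        have : -(B u w ^ 2) / B w w < 0 := div_neg_of_neg_of_pos (by linarith) hc0
        linarith
      have h3 : B u w ^ 2 = 0 := le_antisymm h2 (sq_nonneg _)
      exact pow_eq_zero_iff two_ne_zero |>.mp h3
  · intro hu
    have hlb : ∀ c ∈ fiberCosts L B (L u), B u u ≤ c := by
      rintro c ⟨x, hx, rfl⟩
      have hker : L (x - u) = 0 := by simp [hx]
      have := hexp (x - u) hker hu
      rw [show u + (x - u) = x by abel] at this
      rw [this]
      linarith [psd _ hker]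
    have hb : BddBelow (fiberCosts L B (L u)) := ⟨B u u, hlb⟩
    exact ⟨hb, le_antisymm (le_csInf ⟨B u u, u, rfl, rfl⟩ hlb)
      (csInf_le hb ⟨u, rfl, rfl⟩)⟩

end aux

/-- **Proposition 4.16.** If `{ C(w) : w ∈ ker L }` is bounded below, then the
set of solutions `Sol` is a linear subspace of `E`; moreover for every `v` in
the range of `L`, the set `Sol(v)` of solutions over `v` is either empty or
equals `u0 + Sol(0)` for any `u0 ∈ Sol(v)`, where `Sol(0) = Sol ∩ ker L`:
`Sol(v)` is an affine space modelled on the vector space `Sol(0)`. -/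
theorem solutions_form_subspace
    (E F : Type*) [AddCommGroup E] [Module ℝ E]
    [AddCommGroup F] [Module ℝ F] [FiniteDimensional ℝ F]
    (L : E →ₗ[ℝ] F) (B : E →ₗ[ℝ] E →ₗ[ℝ] ℝ)
    (hBsymm : ∀ x y : E, B x y = B y x)
    (hbdd : BddBelow (fiberCosts L B 0)) :
    ((0 : E) ∈ Sol L B ∧
      (∀ u w : E, u ∈ Sol L B → w ∈ Sol L B → u + w ∈ Sol L B) ∧
      (∀ (c : ℝ) (u : E), u ∈ Sol L B → c • u ∈ Sol L B)) ∧
    (∀ v ∈ LinearMap.range L, ∀ u0 ∈ Sol L B, L u0 = v →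
      { u | u ∈ Sol L B ∧ L u = v } =
        (fun w => u0 + w) '' { w | w ∈ Sol L B ∧ L w = 0 }) := by
  have iff := mem_sol_iff L B hBsymm hbdd
  refine ⟨⟨?_, ?_, ?_⟩, ?_⟩
  · rw [iff]; intro w hw; simp
  · intro u w hu hw
    rw [iff] at hu hw ⊢
    intro x hx
    simp [map_add, hu x hx, hw x hx]
  · intro c u hu
    rw [iff] at hu ⊢
    intro x hx
    simp [map_smul, hu x hx]
  · rintro v ⟨y, rfl⟩ u0 hu0 hLu0
    ext u
    constructor
    · rintro ⟨hu, hLu⟩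
      refine ⟨u - u0, ⟨?_, by simp [hLu, hLu0]⟩, by simp⟩
      rw [iff] at hu hu0 ⊢
      intro x hx
      simp [map_sub, hu x hx, hu0 x hx]
    · rintro ⟨w, ⟨hw, hLw⟩, rfl⟩
      refine ⟨?_, by simp [hLw, hLu0]⟩
      rw [iff] at hw hu0 ⊢
      intro x hx
      simp [map_add, hw x hx, hu0 x hx]
end
end

section
/- Assume that for every v in the range of L the set { C(x) : x ∈ E, L x = v } is bounded below, and let S := { w ∈ ker L : C(w) = 0 }. Assume Monti's condition: there exists a finite-dimensional linear subspace V ⊆ E such that every element of E can be written as a sum of an element of V and an element of S (S has finite codimension in E). Then the infimum is attained over every fiber: for every v in the range of L there exists u ∈ E with L u = v and C(u) = Q(v). (Lemma 4.19: Monti's condition implies existence of solutions of the characteristic optimal control problem.) -/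
/-!
Along a line `x + t • w` inside a fiber the cost is a real quadratic polynomial in `t`, so
boundedness below forces its leading coefficient to be nonnegative and, when that coefficient
vanishes, its linear coefficient to vanish. For `w ∈ S` the latter says that adding `w` does not
change the cost, so by Monti's condition every cost on the fiber is already a cost on the
finite-dimensional affine slice `y₀ + (V ⊓ ker L)`, for any `y₀ ∈ V` in the fiber. There the
cost is a quadratic polynomial bounded below, hence has a positive semidefinite quadratic part
whose null directions its linear part annihilates; the normal equation is then solvable by
duality, and its solution minimizes.
-/

noncomputable section

lemma nonneg_of_forall_le_quadratic {a b c m : ℝ} (h : ∀ t, m ≤ a * (t * t) + b * t + c) :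
    0 ≤ a := by
  have hdisc := discrim_le_zero (a := a) (b := b) (c := c - m + 1) fun t ↦ by linarith [h t]
  have h0 := h 0
  rw [discrim] at hdisc
  nlinarith [sq_nonneg b]

lemma eq_zero_of_forall_le_affine {b c m : ℝ} (h : ∀ t, m ≤ b * t + c) : b = 0 := by
  have hdisc := discrim_le_zero (a := 0) (b := b) (c := c - m) fun t ↦ by linarith [h t]
  rw [discrim] at hdisc
  nlinarith [sq_nonneg b]

namespace LinearMap

variable {E : Type*} [AddCommGroup E] [Module ℝ E] (B : E →ₗ[ℝ] E →ₗ[ℝ] ℝ)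

lemma apply_add_smul_apply_add_smul (x w : E) (t : ℝ) :
    B (x + t • w) (x + t • w) = B w w * (t * t) + (B x w + B w x) * t + B x x := by
  simp only [map_add, map_smul, add_apply, smul_apply, smul_eq_mul]
  ring

lemma apply_add_apply_add_eq_of_forall_le {x w : E} {m : ℝ} (hw : B w w = 0)
    (h : ∀ t : ℝ, m ≤ B (x + t • w) (x + t • w)) : B (x + w) (x + w) = B x x := by
  have hxw : B x w + B w x = 0 := eq_zero_of_forall_le_affine (c := B x x) (m := m) fun t ↦ by
    simpa only [B.apply_add_smul_apply_add_smul, hw, zero_mul, zero_add] using h t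
  simpa [hw, hxw] using B.apply_add_smul_apply_add_smul x w 1

theorem exists_forall_apply_self_add_le [FiniteDimensional ℝ E] (l : E →ₗ[ℝ] ℝ) {m : ℝ}
    (hm : ∀ z, m ≤ B z z + l z) : ∃ z₀, ∀ z, B z₀ z₀ + l z₀ ≤ B z z + l z := by
  have hline (z : E) (t : ℝ) :
      B (t • z) (t • z) + l (t • z) = B z z * (t * t) + l z * t + 0 := by
    simp only [map_smul, smul_apply, smul_eq_mul]
    ring
  have hnonneg (h : E) : 0 ≤ B h h :=
    nonneg_of_forall_le_quadratic fun t ↦ hline h t ▸ hm (t • h)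
  have hl : l ∈ (ker (B + B.flip)).dualAnnihilator := by
    refine (Submodule.mem_dualAnnihilator _).2 fun n hn ↦ ?_
    have hnn : B n n = 0 := by
      have := congrArg (fun f ↦ f n) (mem_ker.1 hn)
      simp only [add_apply, flip_apply, zero_apply] at this
      linarith
    exact eq_zero_of_forall_le_affine (c := 0) (m := m) fun t ↦ by
      simpa only [hline, hnn, zero_mul, zero_add] using hm (t • n)
  -- the normal equation `B h z₀ + B z₀ h = -l h` for all `h`
  obtain ⟨z₀, hz₀⟩ : -l ∈ range (B + B.flip).flip := by
    rw [← dualAnnihilator_ker_eq_range_flip]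
    exact neg_mem hl
  refine ⟨z₀, fun z ↦ ?_⟩
  have hnormal := congrArg (fun f ↦ f (z - z₀)) hz₀
  simp only [flip_apply, add_apply, neg_apply] at hnormal
  have hexpand := B.apply_add_smul_apply_add_smul z₀ (z - z₀) 1
  simp only [one_smul, add_sub_cancel, mul_one] at hexpand
  linarith [hnonneg (z - z₀), l.map_sub z z₀]

theorem exists_mem_forall_mem_apply_add_le (K : Submodule ℝ E) [FiniteDimensional ℝ K]
    (y₀ : E) {m : ℝ} (hm : ∀ z ∈ K, m ≤ B (y₀ + z) (y₀ + z)) :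
    ∃ z₀ ∈ K, ∀ z ∈ K, B (y₀ + z₀) (y₀ + z₀) ≤ B (y₀ + z) (y₀ + z) := by
  have hexpand (z : E) : B (y₀ + z) (y₀ + z) = B y₀ y₀ + (B z z + (B y₀ z + B z y₀)) := by
    simp only [map_add, add_apply]
    ring
  obtain ⟨z₀, hz₀⟩ := exists_forall_apply_self_add_le (B.compl₁₂ K.subtype K.subtype)
    ((B y₀ + B.flip y₀).comp K.subtype) (m := m - B y₀ y₀) fun z ↦ by
      have hbound := hm z z.2
      rw [hexpand] at hbound
      simp only [compl₁₂_apply, Submodule.subtype_apply, comp_apply, add_apply, flip_apply]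
      linarith
  refine ⟨z₀, z₀.2, fun z hz ↦ ?_⟩
  have hmin := hz₀ ⟨z, hz⟩
  simp only [compl₁₂_apply, Submodule.subtype_apply, comp_apply, add_apply, flip_apply] at hmin
  rw [hexpand, hexpand]
  linarith

end LinearMap

theorem monti_condition_gives_solutions_general
    (E F : Type*) [AddCommGroup E] [Module ℝ E]
    [AddCommGroup F] [Module ℝ F]
    (L : E →ₗ[ℝ] F) (B : E →ₗ[ℝ] E →ₗ[ℝ] ℝ)
    (hbdd : ∀ v ∈ LinearMap.range L, BddBelow (fiberCosts L B v))
    (hmonti : ∃ V : Submodule ℝ E, FiniteDimensional ℝ V ∧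
      ∀ x : E, ∃ y ∈ V, ∃ w : E, L w = 0 ∧ B w w = 0 ∧ x = y + w) :
    ∀ v ∈ LinearMap.range L, ∃ u : E, L u = v ∧
      B u u = sInf (fiberCosts L B v) := by
  rintro v ⟨x₀, rfl⟩
  obtain ⟨V, hV, hdecomp⟩ := hmonti
  obtain ⟨m, hm⟩ := hbdd _ ⟨x₀, rfl⟩
  have hfiber (x : E) (hx : L x = L x₀) : m ≤ B x x := hm ⟨x, hx, rfl⟩
  obtain ⟨y₀, hy₀, w₀, hw₀, -, hx₀⟩ := hdecomp x₀
  have hLy₀ : L y₀ = L x₀ := by simp [hx₀, hw₀]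
  obtain ⟨z₀, hz₀K, hz₀⟩ := B.exists_mem_forall_mem_apply_add_le (V ⊓ LinearMap.ker L) y₀
    (m := m) fun z hz ↦ hfiber _ (by simp [hLy₀, LinearMap.mem_ker.1 hz.2])
  have hu : L (y₀ + z₀) = L x₀ := by simp [hLy₀, LinearMap.mem_ker.1 hz₀K.2]
  refine ⟨y₀ + z₀, hu, (IsLeast.csInf_eq (s := fiberCosts L B (L x₀)) ⟨⟨_, hu, rfl⟩, ?_⟩).symm⟩
  rintro _ ⟨x, hx, rfl⟩
  obtain ⟨y, hy, w, hw, hww, rfl⟩ := hdecomp x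
  have hLy : L y = L x₀ := by simpa [hw] using hx
  rw [B.apply_add_apply_add_eq_of_forall_le hww fun t ↦ hfiber _ (by simp [hLy, hw])]
  simpa using hz₀ (y - y₀) (Submodule.mem_inf.2 ⟨V.sub_mem hy hy₀, by simp [hLy, hLy₀]⟩)

/-- **Lemma 4.19.** Assume every fiber cost set is bounded below and let
`S := { w ∈ ker L : C(w) = 0 }`. Under Monti's condition — there is a
finite-dimensional subspace `V ⊆ E` such that every element of `E` is a sum
of an element of `V` and an element of `S` — the infimum is attained over
every fiber: for every `v` in the range of `L` there is `u` with `L u = v`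
and `C(u) = Q(v)`. -/
theorem monti_condition_gives_solutions
    (E F : Type*) [AddCommGroup E] [Module ℝ E]
    [AddCommGroup F] [Module ℝ F] [FiniteDimensional ℝ F]
    (L : E →ₗ[ℝ] F) (B : E →ₗ[ℝ] E →ₗ[ℝ] ℝ)
    (hBsymm : ∀ x y : E, B x y = B y x)
    (hbdd : ∀ v ∈ LinearMap.range L, BddBelow (fiberCosts L B v))
    (hmonti : ∃ V : Submodule ℝ E, FiniteDimensional ℝ V ∧
      ∀ x : E, ∃ y ∈ V, ∃ w : E, L w = 0 ∧ B w w = 0 ∧ x = y + w) :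
    ∀ v ∈ LinearMap.range L, ∃ u : E, L u = v ∧
      B u u = sInf (fiberCosts L B v) :=
  monti_condition_gives_solutions_general E F L B hbdd hmonti
end
end
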